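/- arXiv:0807.3139 — 4 statements merged into one kernel-verified Lean document; each statement's English description precedes it below -/
import Mathlib

section
/- Let ℓ be a prime and 0 ≤ r ≤ ℓ-1. The evaluation map α_r : F_ℓ[X,Y]_r → I_r, sending a homogeneous polynomial P of degree r to the function (a,b) ↦ P(a,b) on F_ℓ², is an injective F_ℓ-linear map. -/
open MvPolynomial

/-- The space `I_n` of functions `f : F_ℓ² → F_ℓ` vanishing at the origin and homogeneous of
degree `n`: `f (x • v) = x ^ n * f v` for all nonzero scalars `x`. -/
def homogeneousFns (ℓ n : ℕ) : Submodule (ZMod ℓ) ((Fin 2 → ZMod ℓ) → ZMod ℓ) where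
  carrier := {f | f 0 = 0 ∧ ∀ x : ZMod ℓ, x ≠ 0 → ∀ v, f (x • v) = x ^ n * f v}
  add_mem' := by
    rintro f g ⟨hf0, hf⟩ ⟨hg0, hg⟩
    refine ⟨by simp [hf0, hg0], fun x hx v => ?_⟩
    simp only [Pi.add_apply, hf x hx v, hg x hx v]
    ring
  zero_mem' := ⟨rfl, by simp⟩
  smul_mem' := by
    rintro c f ⟨hf0, hf⟩
    refine ⟨by simp [hf0], fun x hx v => ?_⟩
    simp only [Pi.smul_apply, hf x hx v, smul_eq_mul]
    ring

/-- The evaluation map `α`, sending a polynomial `P` to the function `v ↦ P(v)` on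
`F_ℓ² \ {0}`, extended by `0` at the origin. -/
noncomputable def evalFn (ℓ : ℕ) (P : MvPolynomial (Fin 2) (ZMod ℓ)) :
    (Fin 2 → ZMod ℓ) → ZMod ℓ :=
  fun v => if v = 0 then 0 else MvPolynomial.eval v P

/-! A homogeneous polynomial of degree `r` is determined by its values as soon as `r` does not
exceed the size of the field, and at the origin its value `0 ^ r * P(v)` is read off from any
`v ≠ 0`; so two homogeneous polynomials of degree `r < ℓ` with the same restriction to
`F_ℓ² \ {0}` coincide. -/

namespace MvPolynomial.IsHomogeneous

variable {σ R : Type*} [CommSemiring R] {P : MvPolynomial σ R} {n : ℕ}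

theorem eval_smul (hP : P.IsHomogeneous n) (x : R) (v : σ → R) :
    eval (x • v) P = x ^ n * eval v P := by
  rw [eval_eq, eval_eq, Finset.mul_sum]
  refine Finset.sum_congr rfl fun d hd => ?_
  have hdeg : ∑ i ∈ d.support, d i = n := by
    simpa [Finsupp.weight_apply, Finsupp.sum] using hP (mem_support_iff.mp hd)
  simp only [Pi.smul_apply, smul_eq_mul, mul_pow, Finset.prod_mul_distrib,
    Finset.prod_pow_eq_pow_sum, hdeg]
  ring

theorem eval_zero_eq_zero_pow_mul (hP : P.IsHomogeneous n) (v : σ → R) :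
    eval 0 P = 0 ^ n * eval v P := by
  simpa using hP.eval_smul 0 v

end MvPolynomial.IsHomogeneous

theorem evalFn_mem_homogeneousFns (ℓ : ℕ) [Fact (Nat.Prime ℓ)] {n : ℕ}
    {P : MvPolynomial (Fin 2) (ZMod ℓ)} (hP : P.IsHomogeneous n) :
    evalFn ℓ P ∈ homogeneousFns ℓ n := by
  refine ⟨if_pos rfl, fun x hx v => ?_⟩
  by_cases hv : v = 0
  · simp [evalFn, hv]
  · simp only [evalFn, hv, smul_ne_zero hx hv, if_false]
    exact hP.eval_smul x v

theorem eval_eq_eval_of_evalFn_eq (ℓ : ℕ) [Fact (Nat.Prime ℓ)] {n : ℕ}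
    {P Q : MvPolynomial (Fin 2) (ZMod ℓ)} (hP : P.IsHomogeneous n) (hQ : Q.IsHomogeneous n)
    (h : evalFn ℓ P = evalFn ℓ Q) (v : Fin 2 → ZMod ℓ) : eval v P = eval v Q := by
  have away_from_zero : ∀ w ≠ 0, eval w P = eval w Q := fun w hw => by
    simpa [evalFn, hw] using congrFun h w
  by_cases hv : v = 0
  · obtain ⟨w, hw⟩ := exists_ne (0 : Fin 2 → ZMod ℓ)
    rw [hv, hP.eval_zero_eq_zero_pow_mul w, hQ.eval_zero_eq_zero_pow_mul w, away_from_zero w hw]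
  · exact away_from_zero v hv

/-- For a prime `ℓ` and `0 ≤ r ≤ ℓ - 1`, the evaluation map
`α_r : F_ℓ[X,Y]_r → I_r` is a well-defined injective `F_ℓ`-linear map. -/
theorem evalFn_injective_on_homogeneous (ℓ : ℕ) [Fact (Nat.Prime ℓ)] (r : ℕ)
    (hr : r ≤ ℓ - 1) :
    (∀ P ∈ MvPolynomial.homogeneousSubmodule (Fin 2) (ZMod ℓ) r,
        evalFn ℓ P ∈ homogeneousFns ℓ r) ∧
    Function.Injective
      (fun P : ↥(MvPolynomial.homogeneousSubmodule (Fin 2) (ZMod ℓ) r) =>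
        evalFn ℓ (P : MvPolynomial (Fin 2) (ZMod ℓ))) := by
  refine ⟨fun P hP => evalFn_mem_homogeneousFns ℓ hP, ?_⟩
  rintro ⟨P, hP⟩ ⟨Q, hQ⟩ hPQ
  have hcard : (r : Cardinal) ≤ Cardinal.mk (ZMod ℓ) := by
    rw [Cardinal.mk_fintype, ZMod.card]
    exact_mod_cast hr.trans (Nat.sub_le ℓ 1)
  exact Subtype.ext (hP.funext_of_le_card hQ (eval_eq_eval_of_evalFn_eq ℓ hP hQ hPQ) hcard)
end

section
/- Let ℓ be a prime and 0 ≤ r ≤ ℓ-1. The bilinear pairing I_r × I_{ℓ-1-r} → F_ℓ defined by (f, g) ↦ Σ_{(a,b) ∈ F_ℓ² \ {0}} f(a,b) g(a,b) is perfect and SL₂(F_ℓ)-invariant (with respect to the action (f·M)(a,b) = f((a,b)Mᵗ)). -/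
/-!
Invariance holds because `v ↦ M v` permutes the nonzero vectors. For nondegeneracy, given `h`
homogeneous of degree `n` with `h v ≠ 0`, pair it with the function of degree `m = ℓ - 1 - n`
supported on the punctured line through `v` and taking the value `c ^ m` at `c • v`: the pairing
is `∑_{c ≠ 0} c ^ (m + n) h v = (ℓ - 1) h v = -h v ≠ 0`.
-/

open MvPolynomial

theorem Finset.sum_univ_erase_zero_comp_addEquiv {V β : Type*} [AddZeroClass V] [Fintype V]
    [DecidableEq V] [AddCommMonoid β] (e : V ≃+ V) (φ : V → β) :
    ∑ v ∈ Finset.univ.erase 0, φ (e v) = ∑ v ∈ Finset.univ.erase 0, φ v :=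
  Finset.sum_equiv e.toEquiv (by simp) (by simp)

section HomogeneousFn

open Finset

variable {K V : Type*} [Field K] [Fintype K] [AddCommGroup V] [Module K V]

def IsHomogeneousFn (n : ℕ) (f : V → K) : Prop :=
  f 0 = 0 ∧ ∀ x : K, x ≠ 0 → ∀ v, f (x • v) = x ^ n * f v

variable [DecidableEq K] [DecidableEq V]

def lineMonomial (v : V) (m : ℕ) (w : V) : K :=
  ∑ c : Kˣ, if w = c • v then (c : K) ^ m else 0

theorem lineMonomial_zero {v : V} (hv : v ≠ 0) (m : ℕ) : lineMonomial v m (0 : V) = (0 : K) :=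
  sum_eq_zero fun c _ => if_neg fun h => hv ((smul_eq_zero_iff_eq c).mp h.symm)

theorem lineMonomial_smul (v : V) (m : ℕ) {x : K} (hx : x ≠ 0) (w : V) :
    lineMonomial v m (x • w) = x ^ m * lineMonomial v m w := by
  let u := Units.mk0 x hx
  calc lineMonomial v m (x • w)
      = ∑ c : Kˣ, if u • w = (u * c) • v then ((u * c : Kˣ) : K) ^ m else 0 :=
        (Fintype.sum_equiv (Equiv.mulLeft u) _ _ fun _ => rfl).symm
    _ = x ^ m * lineMonomial v m w := by
        simp only [lineMonomial, mul_sum, mul_smul, smul_left_cancel_iff, mul_ite, mul_zero,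
          Units.val_mul, mul_pow, u, Units.val_mk0]

theorem isHomogeneousFn_lineMonomial {v : V} (hv : v ≠ 0) (m : ℕ) :
    IsHomogeneousFn m (lineMonomial (K := K) v m) :=
  ⟨lineMonomial_zero hv m, fun _ hx w => lineMonomial_smul v m hx w⟩

variable [Fintype V]

theorem sum_lineMonomial_mul {m n : ℕ} (hmn : m + n = Fintype.card K - 1) {h : V → K}
    (hh : IsHomogeneousFn n h) (v : V) :
    ∑ w ∈ univ.erase 0, lineMonomial v m w * h w = -h v := by
  have hpow (c : Kˣ) : (c : K) ^ m * h (c • v) = h v := by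
    rw [Units.smul_def, hh.2 _ c.ne_zero, ← mul_assoc, ← pow_add, hmn,
      FiniteField.pow_card_sub_one_eq_one _ c.ne_zero, one_mul]
  calc ∑ w ∈ univ.erase 0, lineMonomial v m w * h w
      = ∑ w, lineMonomial v m w * h w := sum_erase _ (by rw [hh.1, mul_zero])
    _ = ∑ c : Kˣ, ∑ w, if w = c • v then (c : K) ^ m * h w else 0 := by
        simp only [lineMonomial, sum_mul, ite_mul, zero_mul]
        exact sum_comm
    _ = ∑ _c : Kˣ, h v := by simp only [Fintype.sum_ite_eq', hpow]
    _ = -h v := by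
        rw [sum_const, card_univ, Fintype.card_units, nsmul_eq_mul,
          Nat.cast_sub Fintype.card_pos, FiniteField.cast_card_eq_zero, Nat.cast_one]
        ring

theorem IsHomogeneousFn.eq_zero_of_forall_sum_mul_eq_zero {m n : ℕ}
    (hmn : m + n = Fintype.card K - 1) {h : V → K} (hh : IsHomogeneousFn n h)
    (H : ∀ k, IsHomogeneousFn m k → ∑ w ∈ univ.erase 0, k w * h w = 0) : h = 0 := by
  funext v
  by_cases hv : v = 0
  · exact hv ▸ hh.1
  simpa only [sum_lineMonomial_mul hmn hh, neg_eq_zero, Pi.zero_apply] using H _ (isHomogeneousFn_lineMonomial hv m)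

end HomogeneousFn

/-- For a prime `ℓ` and `0 ≤ r ≤ ℓ - 1`, the pairing
`(f, g) ↦ Σ_{v ∈ F_ℓ² \ {0}} f(v) g(v)` between `I_r` and `I_{ℓ-1-r}` is `SL₂(F_ℓ)`-invariant
and perfect (nondegenerate on both sides). -/
theorem homogeneousFns_pairing_perfect_invariant (ℓ : ℕ) [Fact (Nat.Prime ℓ)] (r : ℕ)
    (hr : r ≤ ℓ - 1) :
    (∀ M : Matrix (Fin 2) (Fin 2) (ZMod ℓ), M.det = 1 →
      ∀ f ∈ homogeneousFns ℓ r, ∀ g ∈ homogeneousFns ℓ (ℓ - 1 - r),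
        ∑ v ∈ Finset.univ.erase (0 : Fin 2 → ZMod ℓ), f (M.mulVec v) * g (M.mulVec v) =
          ∑ v ∈ Finset.univ.erase (0 : Fin 2 → ZMod ℓ), f v * g v) ∧
    (∀ f ∈ homogeneousFns ℓ r,
      (∀ g ∈ homogeneousFns ℓ (ℓ - 1 - r),
        ∑ v ∈ Finset.univ.erase (0 : Fin 2 → ZMod ℓ), f v * g v = 0) → f = 0) ∧
    (∀ g ∈ homogeneousFns ℓ (ℓ - 1 - r),
      (∀ f ∈ homogeneousFns ℓ r,
        ∑ v ∈ Finset.univ.erase (0 : Fin 2 → ZMod ℓ), f v * g v = 0) → g = 0) := by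
  have hdeg : r + (ℓ - 1 - r) = Fintype.card (ZMod ℓ) - 1 := by rw [ZMod.card]; omega
  refine ⟨fun M hM f _ g _ => ?_, fun f hf H => ?_, fun g hg H => ?_⟩
  · exact Finset.sum_univ_erase_zero_comp_addEquiv
      (Matrix.SpecialLinearGroup.toLin' ⟨M, hM⟩).toAddEquiv (fun v => f v * g v)
  · refine IsHomogeneousFn.eq_zero_of_forall_sum_mul_eq_zero (add_comm r _ ▸ hdeg) hf
      fun k hk => ?_
    simpa only [mul_comm] using H k hk
  · exact IsHomogeneousFn.eq_zero_of_forall_sum_mul_eq_zero hdeg hg H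
end

section
/- Let ℓ be a prime and 0 ≤ r, s ≤ ℓ-1. With π = (β_r ⊗ id) ⊕ (id ⊗ β_s) : I_r ⊗ I_s → (E_{ℓ-1-r} ⊗ I_s) ⊕ (I_r ⊗ E_{ℓ-1-s}), the image of π has dimension (ℓ+1)² − (r+1)(s+1) over F_ℓ. -/
open MvPolynomial

theorem eval_smul_of_isHomogeneous {R : Type*} [CommRing R] {n : ℕ}
    {P : MvPolynomial (Fin 2) R} (hP : P.IsHomogeneous n) (x : R) (v : Fin 2 → R) :
    MvPolynomial.eval (x • v) P = x ^ n * MvPolynomial.eval v P := by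
  rw [eval_eq', eval_eq', Finset.mul_sum]
  apply Finset.sum_congr rfl
  intro d hd
  have hdeg : ∑ i, d i = n := by
    have := hP (mem_support_iff.mp hd)
    rw [← this]
    simp [Finsupp.weight_apply, Finsupp.sum_fintype]
  calc MvPolynomial.coeff d P * ∏ i, (x • v) i ^ d i
      = MvPolynomial.coeff d P * ∏ i, (x ^ d i * v i ^ d i) := by
        simp [mul_pow]
    _ = MvPolynomial.coeff d P * ((∏ i, x ^ d i) * ∏ i, v i ^ d i) := by
        rw [Finset.prod_mul_distrib]
    _ = x ^ n * (MvPolynomial.coeff d P * ∏ i, v i ^ d i) := by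
        rw [Finset.prod_pow_eq_pow_sum, hdeg]; ring

/-- The evaluation map `α_r : E_r → I_r` as a linear map. -/
noncomputable def alphaMap (ℓ : ℕ) [Fact (Nat.Prime ℓ)] (r : ℕ) :
    ↥(MvPolynomial.homogeneousSubmodule (Fin 2) (ZMod ℓ) r) →ₗ[ZMod ℓ]
      ↥(homogeneousFns ℓ r) where
  toFun P :=
    ⟨fun v => if v = 0 then 0 else MvPolynomial.eval v (P : MvPolynomial (Fin 2) (ZMod ℓ)),
      by
        refine ⟨by simp, fun x hx v => ?_⟩
        rcases eq_or_ne v 0 with rfl | hv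
        · simp
        · have h1 : x • v ≠ 0 := by
            simp [smul_eq_zero, hx, hv]
          show (if x • v = 0 then 0 else MvPolynomial.eval (x • v) (P : MvPolynomial (Fin 2) (ZMod ℓ))) = _
          rw [if_neg h1]
          show _ = x ^ r * (if v = 0 then 0 else MvPolynomial.eval v (P : MvPolynomial (Fin 2) (ZMod ℓ)))
          rw [if_neg hv,
            eval_smul_of_isHomogeneous ((mem_homogeneousSubmodule _ _).mp P.2) x v]⟩
  map_add' P Q := by
    ext v
    rcases eq_or_ne v 0 with rfl | hv
    · simp
    · simp [hv]
  map_smul' c P := by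
    ext v
    rcases eq_or_ne v 0 with rfl | hv
    · simp
    · simp [hv]

/-- The map `β_r : I_r → E_{ℓ-1-r}` as a linear map. -/
noncomputable def betaMap (ℓ : ℕ) [Fact (Nat.Prime ℓ)] (r : ℕ) :
    ↥(homogeneousFns ℓ r) →ₗ[ZMod ℓ]
      ↥(MvPolynomial.homogeneousSubmodule (Fin 2) (ZMod ℓ) (ℓ - 1 - r)) where
  toFun f :=
    ⟨∑ v : Fin 2 → ZMod ℓ, MvPolynomial.C ((f : (Fin 2 → ZMod ℓ) → ZMod ℓ) v) *
        (MvPolynomial.C (v 1) * X 0 - MvPolynomial.C (v 0) * X 1) ^ (ℓ - 1 - r),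
      by
        apply Submodule.sum_mem
        intro v _
        rw [mem_homogeneousSubmodule]
        have hL : ((MvPolynomial.C (v 1) * X 0 - MvPolynomial.C (v 0) * X 1 :
            MvPolynomial (Fin 2) (ZMod ℓ))).IsHomogeneous 1 :=
          ((isHomogeneous_X _ _).C_mul _).sub ((isHomogeneous_X _ _).C_mul _)
        simpa using (hL.pow (ℓ - 1 - r)).C_mul _⟩
  map_add' f g := by
    ext
    simp [C_add, add_mul, Finset.sum_add_distrib]
  map_smul' c f := by
    ext
    simp [smul_eq_C_mul, Finset.mul_sum, mul_assoc]

set_option synthInstance.maxHeartbeats 400000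
set_option maxHeartbeats 1000000

/-- `ι = α_r ⊗ α_s : E_r ⊗ E_s → I_r ⊗ I_s`. -/
noncomputable def iotaTensor (ℓ : ℕ) [Fact (Nat.Prime ℓ)] (r s : ℕ) :
    TensorProduct (ZMod ℓ) ↥(MvPolynomial.homogeneousSubmodule (Fin 2) (ZMod ℓ) r)
        ↥(MvPolynomial.homogeneousSubmodule (Fin 2) (ZMod ℓ) s) →ₗ[ZMod ℓ]
      TensorProduct (ZMod ℓ) ↥(homogeneousFns ℓ r) ↥(homogeneousFns ℓ s) :=
  TensorProduct.map (alphaMap ℓ r) (alphaMap ℓ s)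

/-- `π = (β_r ⊗ id) ⊕ (id ⊗ β_s) : I_{r,s} → U_{r,s}`. -/
noncomputable def piTensor (ℓ : ℕ) [Fact (Nat.Prime ℓ)] (r s : ℕ) :
    TensorProduct (ZMod ℓ) ↥(homogeneousFns ℓ r) ↥(homogeneousFns ℓ s) →ₗ[ZMod ℓ]
      (TensorProduct (ZMod ℓ)
          ↥(MvPolynomial.homogeneousSubmodule (Fin 2) (ZMod ℓ) (ℓ - 1 - r))
          ↥(homogeneousFns ℓ s)) ×
        (TensorProduct (ZMod ℓ) ↥(homogeneousFns ℓ r)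
          ↥(MvPolynomial.homogeneousSubmodule (Fin 2) (ZMod ℓ) (ℓ - 1 - s))) :=
  LinearMap.prod (TensorProduct.map (betaMap ℓ r) LinearMap.id)
    (TensorProduct.map LinearMap.id (betaMap ℓ s))

/-!
Over a field tensoring is exact, so `ker π = ker (β_r ⊗ id) ∩ ker (id ⊗ β_s) = ker β_r ⊗ ker β_s`,
and by rank–nullity it remains to see `dim I_n = ℓ + 1` and `dim ker β_r = r + 1`. A homogeneous
function is determined by its values at the `ℓ + 1` points `(1, t)` and `(0, 1)` of `ℙ¹(F_ℓ)`.
The map `β_r` is onto `E_{ℓ-1-r}`, of dimension `ℓ - r`: it sends the function supported on the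
line through `(1, t)` to `-(tX - Y)^{ℓ-1-r}`, and for `m < ℓ` the powers `(tX - Y)^m`,
`t = 0, …, m`, are independent since their coefficient matrix is a Vandermonde matrix with rows
scaled by the nonzero numbers `±C(m, j)`.
-/

open TensorProduct LinearMap

namespace MvPolynomial

theorem finrank_homogeneousSubmodule {σ K : Type*} [Fintype σ] [Field K] (n : ℕ) :
    Module.finrank K (homogeneousSubmodule σ K n) = (Fintype.card σ + n - 1).choose n := by
  classical
  have hdeg : {d : σ →₀ ℕ | d.degree = n} =
      ((Finset.univ : Finset σ).finsuppAntidiag n : Set (σ →₀ ℕ)) := by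
    ext d
    simp [Finsupp.degree_eq_sum]
  rw [homogeneousSubmodule_eq_finsupp_supported, hdeg,
    (AddMonoidAlgebra.supportedEquivFinsupp _).finrank_eq, Module.finrank_finsupp_self,
    ← Nat.card_eq_fintype_card, Nat.card_coe_set_eq, Set.ncard_coe_finset,
    Finset.card_finsuppAntidiag_nat_eq_choose, Finset.card_univ]

theorem finrank_homogeneousSubmodule_fin_two (K : Type*) [Field K] (n : ℕ) :
    Module.finrank K (homogeneousSubmodule (Fin 2) K n) = n + 1 := by
  rw [finrank_homogeneousSubmodule, Fintype.card_fin, show 2 + n - 1 = n + 1 by omega,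
    Nat.choose_succ_self_right]

theorem coeff_C_mul_X_sub_X_pow {K : Type*} [CommRing K] (t : K) {m j : ℕ} (hj : j ≤ m) :
    coeff (Finsupp.single 0 j + Finsupp.single 1 (m - j))
        ((C t * X 0 - X 1 : MvPolynomial (Fin 2) K) ^ m) =
      (-1) ^ (m - j) * m.choose j * t ^ j := by
  have hterm : ∀ i, (C t * X 0) ^ i * (-X 1) ^ (m - i) * (m.choose i : MvPolynomial (Fin 2) K) =
      monomial (Finsupp.single 0 i + Finsupp.single 1 (m - i))
        ((-1) ^ (m - i) * m.choose i * t ^ i) := by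
    intro i
    rw [monomial_add_single, ← C_mul_X_pow_eq_monomial]
    simp only [map_mul, map_pow, map_neg, map_one, map_natCast]
    ring
  rw [sub_eq_add_neg, add_pow, coeff_sum, Finset.sum_eq_single j]
  · rw [hterm, coeff_monomial, if_pos rfl]
  · intro i _ hij
    rw [hterm, coeff_monomial, if_neg]
    intro h
    exact hij (by simpa using congrArg (· 0) h)
  · intro hj'
    exact absurd (Finset.mem_range.2 (Nat.lt_succ_of_le hj)) hj'

theorem linearIndependent_C_mul_X_sub_X_pow {K : Type*} [Field K] {m : ℕ}
    {t : Fin (m + 1) → K} (ht : Function.Injective t)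
    (hchoose : ∀ j ≤ m, (m.choose j : K) ≠ 0) :
    LinearIndependent K fun k => (C (t k) * X 0 - X 1 : MvPolynomial (Fin 2) K) ^ m := by
  rw [Fintype.linearIndependent_iff]
  intro c hc
  refine congrFun (Matrix.eq_zero_of_forall_pow_sum_mul_pow_eq_zero ht fun j => ?_)
  have hj : (j : ℕ) ≤ m := Nat.lt_succ_iff.1 j.2
  have hcoeff := congrArg (coeff (Finsupp.single 0 (j : ℕ) + Finsupp.single 1 (m - j))) hc
  simp only [coeff_sum, coeff_smul, coeff_C_mul_X_sub_X_pow _ hj, smul_eq_mul, coeff_zero,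
    mul_left_comm (c _), ← Finset.mul_sum] at hcoeff
  exact (mul_eq_zero.1 hcoeff).resolve_left
    (mul_ne_zero (pow_ne_zero _ (neg_ne_zero.2 one_ne_zero)) (hchoose j hj))

end MvPolynomial

namespace homogeneousFns

variable {ℓ : ℕ} [Fact ℓ.Prime] {n : ℕ}

variable (n) in
noncomputable def ofChart (g : ZMod ℓ → ZMod ℓ) (c : ZMod ℓ) : homogeneousFns ℓ n :=
  ⟨fun v => if v 0 ≠ 0 then v 0 ^ n * g (v 1 / v 0) else if v 1 ≠ 0 then v 1 ^ n * c else 0, by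
    refine ⟨by simp, fun x hx v => ?_⟩
    simp only [Pi.smul_apply, smul_eq_mul, ne_eq, mul_eq_zero, hx, false_or,
      mul_div_mul_left _ _ hx]
    split_ifs <;> ring⟩

theorem ofChart_eq (f : homogeneousFns ℓ n) :
    ofChart n (fun t => f.1 ![1, t]) (f.1 ![0, 1]) = f := by
  obtain ⟨f, hf0, hf⟩ := f
  ext v
  simp only [ofChart]
  split_ifs with h0 h1
  · rw [← hf _ h0]
    congr
    ext i
    fin_cases i <;> simp [mul_div_cancel₀ _ h0]
  · rw [← hf _ h1]
    congr
    ext i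
    fin_cases i <;> simp [not_not.1 h0]
  · rw [show v = 0 by ext i; fin_cases i <;> simp_all, hf0]

variable (ℓ n) in
noncomputable def chart : homogeneousFns ℓ n ≃ₗ[ZMod ℓ] (ZMod ℓ → ZMod ℓ) × ZMod ℓ where
  toFun f := (fun t => f.1 ![1, t], f.1 ![0, 1])
  invFun p := ofChart n p.1 p.2
  map_add' _ _ := rfl
  map_smul' _ _ := rfl
  left_inv := ofChart_eq
  right_inv p := by ext <;> simp [ofChart]

end homogeneousFns

theorem finrank_homogeneousFns (ℓ : ℕ) [Fact ℓ.Prime] (n : ℕ) :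
    Module.finrank (ZMod ℓ) (homogeneousFns ℓ n) = ℓ + 1 := by
  rw [(homogeneousFns.chart ℓ n).finrank_eq, Module.finrank_prod,
    Module.finrank_fintype_fun_eq_card, Module.finrank_self, ZMod.card]

section betaMap

variable {ℓ : ℕ} [Fact ℓ.Prime] {r : ℕ}

theorem betaMap_ofChart_single (hr : r ≤ ℓ - 1) (t : ZMod ℓ) :
    (betaMap ℓ r (homogeneousFns.ofChart r (Pi.single t 1) 0) : MvPolynomial (Fin 2) (ZMod ℓ)) =
      -(C t * X 0 - X 1) ^ (ℓ - 1 - r) := by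
  set L : MvPolynomial (Fin 2) (ZMod ℓ) := C t * X 0 - X 1
  have hline : ∀ a b : ZMod ℓ,
      C ((homogeneousFns.ofChart r (Pi.single t 1) 0).1 ![a, b]) *
          (C b * X 0 - C a * X 1) ^ (ℓ - 1 - r) =
        if b = t * a then (if a ≠ 0 then L ^ (ℓ - 1 - r) else 0) else 0 := by
    intro a b
    rcases eq_or_ne a 0 with rfl | ha
    · simp [homogeneousFns.ofChart]
    by_cases hb : b = t * a
    · have hL : C b * X 0 - C a * X 1 = C a * L := by simp only [L, hb, map_mul]; ring
      have ha_pow : a ^ r * a ^ (ℓ - 1 - r) = 1 := by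
        rw [← pow_add, Nat.add_sub_cancel' hr, ZMod.pow_card_sub_one_eq_one ha]
      have hf : (homogeneousFns.ofChart r (Pi.single t 1) 0).1 ![a, b] = a ^ r := by
        simp [homogeneousFns.ofChart, ha, hb]
      rw [if_pos hb, if_pos ha, hf, hL, mul_pow, ← mul_assoc, ← map_pow, ← map_mul, ha_pow,
        map_one, one_mul]
    · have hdiv : b / a ≠ t := by rwa [Ne, div_eq_iff ha]
      simp [homogeneousFns.ofChart, ha, hb, hdiv]
  have hsum : ∀ F : (Fin 2 → ZMod ℓ) → MvPolynomial (Fin 2) (ZMod ℓ),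
      ∑ v, F v = ∑ a, ∑ b, F ![a, b] := fun F => by
    rw [← Fintype.sum_prod_type', ← (finTwoArrowEquiv (ZMod ℓ)).symm.sum_comp]
    rfl
  simp only [betaMap, LinearMap.coe_mk, AddHom.coe_mk]
  rw [hsum]
  simp only [Matrix.cons_val_one, Matrix.cons_val_zero, hline, Finset.sum_ite_eq',
    Finset.mem_univ, if_true]
  -- there are `ℓ - 1 = -1` nonzero `a`
  rw [Finset.sum_ite, Finset.sum_const_zero, add_zero, Finset.sum_const, Finset.filter_ne',
    Finset.card_erase_of_mem (Finset.mem_univ _), Finset.card_univ, ZMod.card,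
    ← Nat.cast_smul_eq_nsmul (ZMod ℓ), Nat.cast_pred (Fact.out : ℓ.Prime).pos, ZMod.natCast_self,
    zero_sub, neg_one_smul]

theorem betaMap_surjective (hr : r ≤ ℓ - 1) : Function.Surjective (betaMap ℓ r) := by
  have hℓ : ℓ.Prime := Fact.out
  set m := ℓ - 1 - r
  have hm : m < ℓ := by have := hℓ.pos; omega
  have ht : Function.Injective fun k : Fin (m + 1) => ((k : ℕ) : ZMod ℓ) := by
    intro a b hab
    have := congrArg ZMod.val hab
    simp only [ZMod.val_cast_of_lt (a.2.trans_le hm), ZMod.val_cast_of_lt (b.2.trans_le hm)] at this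
    exact Fin.ext this
  have hchoose : ∀ j ≤ m, (m.choose j : ZMod ℓ) ≠ 0 := fun j hj => by
    rw [Ne, ZMod.natCast_eq_zero_iff, ← hℓ.coprime_iff_not_dvd]
    exact hℓ.coprime_choose_of_lt hm hj
  let u : Fin (m + 1) → homogeneousSubmodule (Fin 2) (ZMod ℓ) m := fun k =>
    -betaMap ℓ r (homogeneousFns.ofChart r (Pi.single (k : ℕ) 1) 0)
  have hu : LinearIndependent (ZMod ℓ) u := by
    have hcomp : Submodule.subtype _ ∘ u =
        fun k : Fin (m + 1) => (C ((k : ℕ) : ZMod ℓ) * X 0 - X 1) ^ m := by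
      funext k
      simp [u, betaMap_ofChart_single hr, m]
    refine LinearIndependent.of_comp (Submodule.subtype _) ?_
    rw [hcomp]
    exact linearIndependent_C_mul_X_sub_X_pow ht hchoose
  have hspan := hu.span_eq_top_of_card_eq_finrank
    (by rw [finrank_homogeneousSubmodule_fin_two, Fintype.card_fin])
  rw [← LinearMap.range_eq_top, eq_top_iff, ← hspan, Submodule.span_le]
  rintro _ ⟨k, rfl⟩
  exact neg_mem ⟨_, rfl⟩

theorem finrank_ker_betaMap (hr : r ≤ ℓ - 1) :
    Module.finrank (ZMod ℓ) (ker (betaMap ℓ r)) = r + 1 := by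
  have h := (betaMap ℓ r).finrank_range_add_finrank_ker
  rw [LinearMap.range_eq_top.2 (betaMap_surjective hr), finrank_top,
    finrank_homogeneousSubmodule_fin_two, finrank_homogeneousFns] at h
  have := (Fact.out : ℓ.Prime).pos
  omega

end betaMap

section tensor

variable {K M M' N N' : Type*} [Field K] [AddCommGroup M] [Module K M] [AddCommGroup M']
  [Module K M'] [AddCommGroup N] [Module K N] [AddCommGroup N'] [Module K N']

theorem LinearMap.ker_prod_rTensor_lTensor (f : M →ₗ[K] M') (g : N →ₗ[K] N') :
    ker ((f.rTensor N).prod (g.lTensor M)) = range (map (ker f).subtype (ker g).subtype) := by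
  have hker_f : ker (f.rTensor N) = range ((ker f).subtype.rTensor N) :=
    (Module.Flat.rTensor_exact N (exact_subtype_ker_map f)).linearMap_ker_eq
  have hker_g : ker (g.lTensor (ker f)) = range ((ker g).subtype.lTensor (ker f)) :=
    (Module.Flat.lTensor_exact (ker f) (exact_subtype_ker_map g)).linearMap_ker_eq
  have hinj : Function.Injective ((ker f).subtype.rTensor N') :=
    Module.Flat.rTensor_preserves_injective_linearMap _ (ker f).injective_subtype
  rw [ker_prod, hker_f, ← Submodule.map_comap_eq, ← ker_comp, lTensor_comp_rTensor,
    ← rTensor_comp_lTensor, ker_comp, ker_eq_bot_of_injective hinj, Submodule.comap_bot, hker_g,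
    ← range_comp, rTensor_comp_lTensor]

theorem LinearMap.finrank_ker_prod_rTensor_lTensor (f : M →ₗ[K] M') (g : N →ₗ[K] N') :
    Module.finrank K (ker ((f.rTensor N).prod (g.lTensor M))) =
      Module.finrank K (ker f) * Module.finrank K (ker g) := by
  rw [ker_prod_rTensor_lTensor, finrank_range_of_inj (map_injective_of_flat_flat _ _
    (ker f).injective_subtype (ker g).injective_subtype), Module.finrank_tensorProduct]

end tensor

/-- For a prime `ℓ` and `0 ≤ r, s ≤ ℓ - 1`, the image of
`π = (β_r ⊗ id) ⊕ (id ⊗ β_s) : I_r ⊗ I_s → (E_{ℓ-1-r} ⊗ I_s) ⊕ (I_r ⊗ E_{ℓ-1-s})`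
has dimension `(ℓ+1)² − (r+1)(s+1)` over `F_ℓ`. -/
theorem piTensor_range_finrank (ℓ : ℕ) [Fact (Nat.Prime ℓ)] (r s : ℕ)
    (hr : r ≤ ℓ - 1) (hs : s ≤ ℓ - 1) :
    Module.finrank (ZMod ℓ) ↥(LinearMap.range (piTensor ℓ r s)) =
      (ℓ + 1) ^ 2 - (r + 1) * (s + 1) := by
  have hker : Module.finrank (ZMod ℓ) (ker (piTensor ℓ r s)) = (r + 1) * (s + 1) := by
    rw [piTensor, ← rTensor, ← lTensor, finrank_ker_prod_rTensor_lTensor, finrank_ker_betaMap hr,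
      finrank_ker_betaMap hs]
  have h := (piTensor ℓ r s).finrank_range_add_finrank_ker
  rw [hker, Module.finrank_tensorProduct, finrank_homogeneousFns, finrank_homogeneousFns] at h
  rw [sq, ← h, Nat.add_sub_cancel]
end

section
/- Let ℓ be a prime. The only SL₂(F_ℓ)-invariant homogeneous polynomial of degree ℓ-1 in F_ℓ[X,Y] is zero: if P ∈ F_ℓ[X,Y]_{ℓ-1} satisfies P(aX+bY, cX+dY) = P(X,Y) for all [[a,b],[c,d]] ∈ SL₂(F_ℓ), then P = 0. -/
open MvPolynomial

/-- The substitution action of a 2×2 matrix `M` on polynomials: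
`(P · M)(X, Y) = P(aX + bY, cX + dY)` for `M = !![a, b; c, d]`. -/
noncomputable def matrixSubstAction {R : Type*} [CommRing R]
    (M : Matrix (Fin 2) (Fin 2) R) (P : MvPolynomial (Fin 2) R) : MvPolynomial (Fin 2) R :=
  MvPolynomial.aeval (fun i => ∑ j : Fin 2, MvPolynomial.C (M i j) * X j) P

/-!
`SL₂(K)` acts transitively on `K² \ {0}`, so an invariant `P` takes a single value `c` away
from the origin, while `P(0) = 0` by homogeneity. Summing over `K²` gives `(q² - 1) c = -c`;
on the other hand `deg P < 2 (q - 1)`, so this sum vanishes (Chevalley–Warning). Hence `P`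
vanishes on `K²`, and a homogeneous polynomial of degree `≤ q` vanishing on `K²` is zero.
-/

open scoped Matrix

theorem eval_matrixSubstAction {R : Type*} [CommRing R] (M : Matrix (Fin 2) (Fin 2) R)
    (w : Fin 2 → R) (P : MvPolynomial (Fin 2) R) :
    eval w (matrixSubstAction M P) = eval (M *ᵥ w) P := by
  rw [matrixSubstAction, aeval_eq_eval₂Hom, coe_eval₂Hom, eval_eval₂]
  have h_const : (eval w).comp (algebraMap R (MvPolynomial (Fin 2) R)) = RingHom.id R := by
    ext r; simp [algebraMap_eq]
  have h_vars : (fun i => eval w (∑ j : Fin 2, C (M i j) * X j)) = M *ᵥ w := by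
    funext i; simp [Matrix.mulVec, dotProduct]
  rw [h_const, h_vars, eval₂_id]

theorem Matrix.exists_det_eq_one_mulVec_eq {K : Type*} [Field K] {v : Fin 2 → K} (hv : v ≠ 0) :
    ∃ M : Matrix (Fin 2) (Fin 2) K, M.det = 1 ∧ M *ᵥ ![1, 0] = v := by
  by_cases h0 : v 0 = 0
  · have h1 : v 1 ≠ 0 := fun h1 => hv (funext fun i => by fin_cases i <;> assumption)
    refine ⟨!![0, -(v 1)⁻¹; v 1, 0], by simp [Matrix.det_fin_two_of, h1], ?_⟩
    ext i; fin_cases i <;> simp [h0]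
  · refine ⟨!![v 0, 0; v 1, (v 0)⁻¹], by simp [Matrix.det_fin_two_of, h0], ?_⟩
    ext i; fin_cases i <;> simp

theorem eval_eq_of_forall_det_eq_one {K : Type*} [Field K] {P : MvPolynomial (Fin 2) K}
    (hinv : ∀ M : Matrix (Fin 2) (Fin 2) K, M.det = 1 → matrixSubstAction M P = P)
    {v : Fin 2 → K} (hv : v ≠ 0) : eval v P = eval ![1, 0] P := by
  obtain ⟨M, hdet, rfl⟩ := Matrix.exists_det_eq_one_mulVec_eq hv
  rw [← eval_matrixSubstAction, hinv M hdet]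

theorem MvPolynomial.IsHomogeneous.eval_zero_eq_zero {R σ : Type*} [CommSemiring R]
    {P : MvPolynomial σ R} {n : ℕ} (hP : P.IsHomogeneous n) (hn : n ≠ 0) : eval 0 P = 0 := by
  rw [eval_zero, constantCoeff_eq]
  exact hP.coeff_eq_zero (by simpa using hn.symm)

theorem Fintype.sum_eq_neg_of_card_eq_zero {α R : Type*} [Fintype α] [DecidableEq α] [Ring R]
    (hcard : (Fintype.card α : R) = 0) {f : α → R} {a : α} {c : R} (ha : f a = 0)
    (hf : ∀ x ≠ a, f x = c) : ∑ x, f x = -c := by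
  have hsum : ∑ x, f x + c = (Fintype.card α : R) * c := by
    rw [← Finset.sum_erase_add _ _ (Finset.mem_univ a), ha, add_zero,
      Finset.sum_congr rfl fun x hx => hf x (Finset.ne_of_mem_erase hx), Finset.sum_const,
      Finset.card_erase_of_mem (Finset.mem_univ a), nsmul_eq_mul, Finset.card_univ,
      Nat.cast_sub (Fintype.card_pos_iff.mpr ⟨a⟩), Nat.cast_one, sub_mul, one_mul,
      sub_add_cancel]
  rw [hcard, zero_mul] at hsum
  exact eq_neg_of_add_eq_zero_left hsum

theorem MvPolynomial.IsHomogeneous.eq_zero_of_forall_det_eq_one {K : Type*} [Field K] [Fintype K]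
    {n : ℕ} (hn : n ≠ 0) (hnq : n < Fintype.card K) {P : MvPolynomial (Fin 2) K}
    (hP : P.IsHomogeneous n)
    (hinv : ∀ M : Matrix (Fin 2) (Fin 2) K, M.det = 1 → matrixSubstAction M P = P) : P = 0 := by
  classical
  have h_origin : eval 0 P = 0 := hP.eval_zero_eq_zero hn
  have h_sum_zero : ∑ v, eval v P = 0 :=
    sum_eval_eq_zero P (by simp only [Fintype.card_fin]; have := hP.totalDegree_le; omega)
  have h_sum_neg : ∑ v, eval v P = -eval ![1, 0] P := by
    refine Fintype.sum_eq_neg_of_card_eq_zero ?_ h_origin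
      fun v hv => eval_eq_of_forall_det_eq_one hinv hv
    simp
  have h_base : eval ![1, 0] P = 0 := neg_eq_zero.mp (h_sum_neg.symm.trans h_sum_zero)
  refine hP.eq_zero_of_forall_eval_eq_zero_of_le_card (fun v => ?_) ?_
  · by_cases hv : v = 0
    · rw [hv, h_origin]
    · rw [eval_eq_of_forall_det_eq_one hinv hv, h_base]
  · simpa using hnq.le

/-- For a prime `ℓ`, the only `SL₂(F_ℓ)`-invariant homogeneous polynomial of
degree `ℓ - 1` in `F_ℓ[X,Y]` is zero. -/
theorem invariant_homogeneous_degree_sub_one_eq_zero (ℓ : ℕ) (hℓ : ℓ.Prime)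
    (P : MvPolynomial (Fin 2) (ZMod ℓ))
    (hP : P ∈ MvPolynomial.homogeneousSubmodule (Fin 2) (ZMod ℓ) (ℓ - 1))
    (hinv : ∀ M : Matrix (Fin 2) (Fin 2) (ZMod ℓ), M.det = 1 → matrixSubstAction M P = P) :
    P = 0 := by
  have : Fact ℓ.Prime := ⟨hℓ⟩
  have h_two_le := hℓ.two_le
  exact IsHomogeneous.eq_zero_of_forall_det_eq_one (by omega) (by rw [ZMod.card]; omega)
    ((mem_homogeneousSubmodule _ _).mp hP) hinv
end
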